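/- arXiv:2509.03496 — 6 statements merged into one kernel-verified Lean document; each statement's English description precedes it below -/
import Mathlib

section
/- For every integer q ≥ 2 and every δ with 0 < δ ≤ 1/q, the squared Hellinger distance between the two-point distributions p⁺ = (1 - 1/q + δ, 1/q - δ) and p⁻ = (1 - 1/q - δ, 1/q + δ), given by d_H²(p⁺,p⁻) = 1 - √((1-1/q)² - δ²) - √((1/q)² - δ²), satisfies d_H²(p⁺,p⁻) ≤ q²δ²/(q-1). -/
/-!
Each square root is bounded below by its first-order expansion, `√(x² - δ²) ≥ x - δ²/x`.
Since the two masses `a = 1 - 1/q` and `b = 1/q` add up to `1`, the constant terms cancel and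
what remains is `δ² (1/a + 1/b) = δ² / (a b) = q² δ² / (q - 1)`.
-/

lemma Real.sub_sq_div_le_sqrt_sq_sub_sq {x : ℝ} (hx : 0 < x) (δ : ℝ) :
    x - δ ^ 2 / x ≤ √(x ^ 2 - δ ^ 2) := by
  set t := δ ^ 2 / x with ht
  rcases le_or_gt (x - t) 0 with hneg | hpos
  · exact hneg.trans (Real.sqrt_nonneg _)
  · have hδ : δ ^ 2 = x * t := by rw [ht]; field_simp
    have ht0 : 0 ≤ t := by positivity
    rw [Real.le_sqrt' hpos]
    nlinarith

lemma one_sub_sqrt_sub_sqrt_le_of_add_eq_one {a b : ℝ} (ha : 0 < a) (hb : 0 < b)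
    (hab : a + b = 1) (δ : ℝ) :
    1 - √(a ^ 2 - δ ^ 2) - √(b ^ 2 - δ ^ 2) ≤ δ ^ 2 / (a * b) := by
  have hsum : δ ^ 2 / a + δ ^ 2 / b = δ ^ 2 / (a * b) := by
    field_simp
    rw [add_comm b a, hab, mul_one]
  linarith [Real.sub_sq_div_le_sqrt_sq_sub_sq ha δ, Real.sub_sq_div_le_sqrt_sq_sub_sq hb δ]

theorem hellinger_sq_le_general (q : ℕ) (hq : 2 ≤ q) (δ : ℝ) :
    1 - Real.sqrt ((1 - 1 / (q : ℝ)) ^ 2 - δ ^ 2) - Real.sqrt ((1 / (q : ℝ)) ^ 2 - δ ^ 2) ≤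
      (q : ℝ) ^ 2 * δ ^ 2 / ((q : ℝ) - 1) := by
  have hq2 : (2 : ℝ) ≤ q := by exact_mod_cast hq
  have hqpos : (0 : ℝ) < q := by linarith
  have ha : 0 < 1 - 1 / (q : ℝ) := by
    rw [sub_pos, div_lt_one hqpos]
    linarith
  have hprod : δ ^ 2 / ((1 - 1 / (q : ℝ)) * (1 / q)) = (q : ℝ) ^ 2 * δ ^ 2 / ((q : ℝ) - 1) := by
    have hq1 : (q : ℝ) - 1 ≠ 0 := by linarith
    field_simp
  rw [← hprod]
  exact one_sub_sqrt_sub_sqrt_le_of_add_eq_one ha (by positivity) (sub_add_cancel _ _) δ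

theorem hellinger_sq_le (q : ℕ) (hq : 2 ≤ q) (δ : ℝ) (hδ : 0 < δ) (hδq : δ ≤ 1 / q) :
    1 - Real.sqrt ((1 - 1 / (q : ℝ)) ^ 2 - δ ^ 2) - Real.sqrt ((1 / (q : ℝ)) ^ 2 - δ ^ 2) ≤
      (q : ℝ) ^ 2 * δ ^ 2 / ((q : ℝ) - 1) :=
  hellinger_sq_le_general q hq δ
end

section
/- For every integer q ≥ 3 and every δ with 0 < δ ≤ 1/q, the Tsallis entropies of the two-point distributions p⁺ = (1 - 1/q + δ, 1/q - δ) and p⁻ = (1 - 1/q - δ, 1/q + δ) satisfy H_q(p⁻) - H_q(p⁺) > 2((1 - 1/q)^q - (1 - 1/q)(1/q)^(q-1)) · δ. -/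
/-!
Writing `x = 1 - 1/q`, `y = 1/q`, the gap is `(f x - f y) / (q - 1)` with
`f c = (c + δ)^q - (c - δ)^q`. By the binomial theorem `f` is a polynomial in `c` with
nonnegative coefficients `C(q,k) (δ^(q-k) - (-δ)^(q-k))`, so `f x - f y` dominates the single
term `k = q - 1`, namely `2 q δ (x^(q-1) - y^(q-1))`. Since `x^q = x · x^(q-1)` and
`x < 1 < q/(q-1)`, this beats the claimed bound as soon as `y < x`, i.e. `q ≥ 3`.
-/

open Finset

theorem add_pow_sub_sub_pow_eq_sum {R : Type*} [CommRing R] (c d : R) (n : ℕ) :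
    (c + d) ^ n - (c - d) ^ n =
      ∑ k ∈ range (n + 1), c ^ k * (d ^ (n - k) - (-d) ^ (n - k)) * n.choose k := by
  rw [sub_eq_add_neg c d, add_pow, add_pow, ← sum_sub_distrib]
  exact sum_congr rfl fun k _ => by ring

section

variable {R : Type*} [CommRing R] [LinearOrder R] [IsStrictOrderedRing R]

theorem pow_sub_neg_pow_nonneg {d : R} (hd : 0 ≤ d) (m : ℕ) : 0 ≤ d ^ m - (-d) ^ m := by
  rcases Nat.even_or_odd m with hm | hm
  · simp [hm.neg_pow]
  · have := pow_nonneg hd m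
    rw [hm.neg_pow]
    linarith

theorem two_mul_mul_pow_sub_pow_le {x y d : R} (hy : 0 ≤ y) (hyx : y ≤ x) (hd : 0 ≤ d)
    (n : ℕ) :
    2 * (n + 1) * d * (x ^ n - y ^ n) ≤
      (x + d) ^ (n + 1) - (x - d) ^ (n + 1) - ((y + d) ^ (n + 1) - (y - d) ^ (n + 1)) := by
  rw [add_pow_sub_sub_pow_eq_sum, add_pow_sub_sub_pow_eq_sum, ← sum_sub_distrib]
  have hterm : ∀ k ∈ range (n + 2), 0 ≤
      x ^ k * (d ^ (n + 1 - k) - (-d) ^ (n + 1 - k)) * ((n + 1).choose k : R) -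
        y ^ k * (d ^ (n + 1 - k) - (-d) ^ (n + 1 - k)) * ((n + 1).choose k : R) := by
    intro k _
    have hxy : 0 ≤ x ^ k - y ^ k := sub_nonneg.2 (pow_le_pow_left₀ hy hyx k)
    have hd' := pow_sub_neg_pow_nonneg hd (n + 1 - k)
    rw [← sub_mul, ← sub_mul]
    positivity
  refine le_of_eq_of_le ?_ (single_le_sum hterm (mem_range.2 (by omega : n < n + 2)))
  simp only [Nat.add_sub_cancel_left, Nat.choose_succ_self_right]
  push_cast
  ring

end

theorem tsallis_gap_general (q : ℕ) (hq : 3 ≤ q) (δ : ℝ) (hδ : 0 < δ) :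
    (1 / (1 - (q : ℝ))) * ((1 - 1 / (q : ℝ) - δ) ^ q + (1 / (q : ℝ) + δ) ^ q - 1) -
        (1 / (1 - (q : ℝ))) * ((1 - 1 / (q : ℝ) + δ) ^ q + (1 / (q : ℝ) - δ) ^ q - 1) >
      2 * ((1 - 1 / (q : ℝ)) ^ q - (1 - 1 / (q : ℝ)) * (1 / (q : ℝ)) ^ (q - 1)) * δ := by
  obtain ⟨n, rfl⟩ : ∃ n, q = n + 1 := ⟨q - 1, by omega⟩
  have hn : (2 : ℝ) ≤ n := by exact_mod_cast (by omega : 2 ≤ n)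
  set x : ℝ := 1 - 1 / ((n + 1 : ℕ) : ℝ)
  set y : ℝ := 1 / ((n + 1 : ℕ) : ℝ)
  have hy : 0 < y := by positivity
  have hyx : y < x := by
    simp only [x, y]; push_cast; rw [lt_sub_iff_add_lt, ← add_div, div_lt_one] <;> linarith
  have hx1 : x < 1 := sub_lt_self 1 hy
  have hgap : 0 < x ^ n - y ^ n := sub_pos.2 (pow_lt_pow_left₀ hyx hy.le (by omega))
  have hkey := two_mul_mul_pow_sub_pow_le hy.le hyx.le hδ.le n
  rw [gt_iff_lt, Nat.add_sub_cancel, pow_succ', ← mul_sub]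
  push_cast at hkey ⊢
  rw [← mul_sub, one_div_mul_eq_div, lt_div_iff_of_neg (by linarith)]
  nlinarith [mul_pos (mul_pos hδ hgap) (sub_pos.2 hx1)]

theorem tsallis_gap (q : ℕ) (hq : 3 ≤ q) (δ : ℝ) (hδ : 0 < δ) (hδq : δ ≤ 1 / q) :
    (1 / (1 - (q : ℝ))) * ((1 - 1 / (q : ℝ) - δ) ^ q + (1 / (q : ℝ) + δ) ^ q - 1) -
        (1 / (1 - (q : ℝ))) * ((1 - 1 / (q : ℝ) + δ) ^ q + (1 / (q : ℝ) - δ) ^ q - 1) >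
      2 * ((1 - 1 / (q : ℝ)) ^ q - (1 - 1 / (q : ℝ)) * (1 / (q : ℝ)) ^ (q - 1)) * δ :=
  tsallis_gap_general q hq δ hδ
end

section
/- For every integer q ≥ 2 and every polynomial p : ℝ → ℝ with |p(x)| ≤ 1 for all x ∈ [-1,1] and sup_{x∈[-1,1]} |p(x) - x^q| ≤ ε where 0 < ε < (e-1)/(2e), there exists x* ∈ (1 - 1/q, 1) with p'(x*) > q(1 - 1/e - 2ε). -/
theorem exists_large_derivative (q : ℕ) (hq : 2 ≤ q) (p : Polynomial ℝ) (ε : ℝ)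
    (hε : 0 < ε) (hε' : ε < (Real.exp 1 - 1) / (2 * Real.exp 1))
    (hbd : ∀ x ∈ Set.Icc (-1 : ℝ) 1, |p.eval x| ≤ 1)
    (happrox : ∀ x ∈ Set.Icc (-1 : ℝ) 1, |p.eval x - x ^ q| ≤ ε) :
    ∃ x ∈ Set.Ioo (1 - 1 / (q : ℝ)) 1,
      p.derivative.eval x > (q : ℝ) * (1 - (Real.exp 1)⁻¹ - 2 * ε) := by
  have hq0 : (0 : ℝ) < q := by positivity
  set a : ℝ := 1 - 1 / q with ha
  have hinv : (0 : ℝ) < 1 / q := by positivity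
  have hinv1 : 1 / (q : ℝ) ≤ 1 / 2 := by
    apply one_div_le_one_div_of_le <;> norm_num
    exact_mod_cast hq
  have ha0 : (0 : ℝ) ≤ a := by simp only [ha]; linarith
  have ha1 : a < 1 := by simp only [ha]; linarith
  have haI : a ∈ Set.Icc (-1 : ℝ) 1 := ⟨by linarith, le_of_lt ha1⟩
  have h1I : (1 : ℝ) ∈ Set.Icc (-1 : ℝ) 1 := ⟨by norm_num, le_refl 1⟩
  -- (1 - 1/q)^q < 1/e
  have hkey : a ^ q < (Real.exp 1)⁻¹ := by
    have h1 : a < Real.exp (-(1 / q)) := by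
      have := Real.add_one_lt_exp (x := -(1 / (q : ℝ))) (by linarith)
      linarith
    calc a ^ q < Real.exp (-(1 / q)) ^ q := by
          exact pow_lt_pow_left₀ h1 ha0 (by omega)
      _ = Real.exp (-(1 / q) * q) := by rw [← Real.exp_nat_mul]; ring_nf
      _ = (Real.exp 1)⁻¹ := by
          rw [← Real.exp_neg]; congr 1; field_simp
  -- MVT
  have hmvt := exists_hasDerivAt_eq_slope (f := fun x => p.eval x)
    (f' := fun x => p.derivative.eval x) ha1
    (p.continuous.continuousOn)
    (fun x _ => p.hasDerivAt x)
  obtain ⟨c, hc, hderiv⟩ := hmvt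
  refine ⟨c, hc, ?_⟩
  have hpa : p.eval a ≤ a ^ q + ε := by
    have := happrox a haI; have := abs_le.mp this; linarith [this.2]
  have hp1 : 1 - ε ≤ p.eval 1 := by
    have := happrox 1 h1I; have := abs_le.mp this
    simp only [one_pow] at this; linarith [this.1]
  have h1a : 1 - a = 1 / q := by simp [ha]
  rw [hderiv, h1a, div_div_eq_mul_div, div_one]
  have : 1 - (Real.exp 1)⁻¹ - 2 * ε < p.eval 1 - p.eval a := by linarith
  calc (q:ℝ) * (1 - (Real.exp 1)⁻¹ - 2 * ε) < (q:ℝ) * (p.eval 1 - p.eval a) := by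
        exact mul_lt_mul_of_pos_left this hq0
    _ = (p.eval 1 - p.eval a) * q := by ring
end

section
/- (Markov brothers' inequality, special case used) If p ∈ ℝ[x] has degree d and |p(x)| ≤ 1 for all x ∈ [-1,1], then |p'(x)| ≤ d² for all x ∈ [-1,1]. -/
/-!
For `|x| ≤ cos (π / 2d)` the bound follows from Bernstein's inequality
`|sin θ · p'(cos θ)| ≤ d`, because there `sin (arccos x) ≥ sin (π / 2d) ≥ 1 / d`.
Bernstein's inequality is proved by zero counting: if `|p| < 1` on `[-1, 1]` but
`-sin θ₀ · p'(cos θ₀) > d`, then `p (cos θ) - sin (d θ + c)`, with the sinusoid chosen to pass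
through the point at `θ₀`, has `2d + 1` zeros in one period, which is too many for a
trigonometric polynomial of degree `d`.
For `cos (π / 2d) < x ≤ 1`, the point `x` lies to the right of all roots of the Chebyshev
polynomial `T_d`. Interpolating `p'` at these roots, where Bernstein gives `|p'| ≤ |T_d'|`,
yields `|p'(x)| ≤ |T_d'(x)| ≤ T_d'(1) = d²`. Negative `x` follow by reflection.
-/

open Polynomial Real Set Filter Topology
open Complex (I)
open scoped Finset Complex

theorem exists_mem_Ioo_eq_zero_of_mul_neg {α : Type*} [ConditionallyCompleteLinearOrder α]
    [TopologicalSpace α] [OrderTopology α] [DenselyOrdered α] {f : α → ℝ} {a b : α}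
    (hab : a ≤ b) (hf : ContinuousOn f (Icc a b)) (hneg : f a * f b < 0) :
    ∃ c ∈ Ioo a b, f c = 0 := by
  rcases mul_neg_iff.mp hneg with ⟨ha, hb⟩ | ⟨ha, hb⟩
  · exact intermediate_value_Ioo' hab hf ⟨hb, ha⟩
  · exact intermediate_value_Ioo hab hf ⟨ha, hb⟩

theorem exists_mem_Ioo_eq_zero_of_neg_one_pow_mul_pos {f : ℝ → ℝ} (hf : Continuous f)
    {τ : ℕ → ℝ} (hτ : StrictMono τ) (halt : ∀ m, 0 < (-1) ^ m * f (τ m)) (m : ℕ) :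
    ∃ z ∈ Ioo (τ m) (τ (m + 1)), f z = 0 := by
  have hsq : ((-1 : ℝ) ^ m) ^ 2 = 1 := by rw [← pow_mul, mul_comm, pow_mul]; simp
  have hprod : (-1) ^ m * f (τ m) * ((-1) ^ (m + 1) * f (τ (m + 1)))
      = -(f (τ m) * f (τ (m + 1))) := by
    rw [pow_succ]
    linear_combination (-(f (τ m) * f (τ (m + 1)))) * hsq
  refine exists_mem_Ioo_eq_zero_of_mul_neg (hτ m.lt_succ_self).le hf.continuousOn ?_
  linarith [mul_pos (halt m) (halt (m + 1))]

theorem exists_mem_Ioo_eq_zero_of_hasDerivAt_pos {f : ℝ → ℝ} {a b f' : ℝ}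
    (hf : ContinuousOn f (Icc a b)) (hder : HasDerivAt f f' a) (hf' : 0 < f') (ha : f a = 0)
    (hab : a < b) (hb : f b < 0) : ∃ c ∈ Ioo a b, f c = 0 := by
  have hslope : ∀ᶠ x in 𝓝[>] a, 0 < slope f a x ∧ x ∈ Ioo a b :=
    (((hasDerivAt_iff_tendsto_slope.mp hder).mono_left (nhdsGT_le_nhdsNE a)).eventually
      (eventually_gt_nhds hf')).and (Ioo_mem_nhdsGT hab)
  obtain ⟨u, hu, hua, hub⟩ := hslope.exists
  obtain ⟨c, hc, hc0⟩ := exists_mem_Ioo_eq_zero_of_mul_neg hub.le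
    (hf.mono (Icc_subset_Icc hua.le le_rfl)) (mul_neg_of_pos_of_neg (pos_of_slope_pos hua hu ha) hb)
  exact ⟨c, ⟨hua.trans hc.1, hc.2⟩, hc0⟩

theorem exists_finset_zeros_of_neg_one_pow_mul_pos {f : ℝ → ℝ} (hf : Continuous f)
    {τ : ℕ → ℝ} (hτ : StrictMono τ) (halt : ∀ m, 0 < (-1) ^ m * f (τ m)) {θ₀ f' : ℝ}
    (hθ₀ : θ₀ ∈ Ioo (τ 0) (τ 1)) (hf₀ : f θ₀ = 0) (hder : HasDerivAt f f' θ₀) (hf' : 0 < f')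
    (n : ℕ) : ∃ s : Finset ℝ, ↑s ⊆ Ioo (τ 0) (τ (n + 1)) ∧ #s = n + 2 ∧ ∀ θ ∈ s, f θ = 0 := by
  choose z hz hz0 using exists_mem_Ioo_eq_zero_of_neg_one_pow_mul_pos hf hτ halt
  have hz_mono : StrictMono z := strictMono_nat_of_lt_succ fun m => (hz m).2.trans (hz (m + 1)).1
  obtain ⟨w, hw, hw0⟩ := exists_mem_Ioo_eq_zero_of_hasDerivAt_pos hf.continuousOn hder hf' hf₀
    hθ₀.2 (by simpa using halt 1)
  have hw_lt : ∀ m, 1 ≤ m → w < z m := fun m hm => hw.2.trans ((hz 1).1.trans_le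
    (hz_mono.monotone hm))
  refine ⟨insert θ₀ (insert w ((Finset.Icc 1 n).image z)), ?_, ?_, ?_⟩
  · have hτ_le : ∀ {m}, m ≤ n + 1 → τ m ≤ τ (n + 1) := fun hm => hτ.monotone hm
    intro x hx
    simp only [Finset.coe_insert, mem_insert_iff, Finset.mem_coe, Finset.mem_image,
      Finset.mem_Icc] at hx
    rcases hx with rfl | rfl | ⟨m, ⟨hm1, hmn⟩, rfl⟩
    · exact ⟨hθ₀.1, hθ₀.2.trans_le (hτ_le (by omega))⟩
    · exact ⟨hθ₀.1.trans hw.1, hw.2.trans_le (hτ_le (by omega))⟩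
    · exact ⟨(hτ.monotone m.zero_le).trans_lt (hz m).1, (hz m).2.trans_le (hτ_le (by omega))⟩
  · rw [Finset.card_insert_of_notMem, Finset.card_insert_of_notMem,
      Finset.card_image_of_injective _ hz_mono.injective, Nat.card_Icc]
    · omega
    · simp only [Finset.mem_image, Finset.mem_Icc, not_exists, not_and]
      exact fun m hm => (hw_lt m hm.1).ne'
    · simp only [Finset.mem_insert, Finset.mem_image, Finset.mem_Icc, not_or, not_exists, not_and]
      exact ⟨hw.1.ne, fun m hm => (hw.1.trans (hw_lt m hm.1)).ne'⟩
  · intro x hx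
    simp only [Finset.mem_insert, Finset.mem_image, Finset.mem_Icc] at hx
    rcases hx with rfl | rfl | ⟨m, -, rfl⟩
    exacts [hf₀, hw0, hz0 m]

theorem Complex.exp_ofReal_mul_I_sq_add_one (θ : ℝ) :
    cexp (θ * I) ^ 2 + 1 = 2 * Real.cos θ * cexp (θ * I) := by
  have h : cexp (θ * I) * cexp (-θ * I) = 1 := by
    rw [← Complex.exp_add]
    simp
  rw [Complex.ofReal_cos, Complex.cos]
  linear_combination -h

/-- `F` is a real trigonometric polynomial of degree at most `d`, encoded as:
`exp (i d θ) F θ` is a polynomial of degree at most `2 d` in `exp (i θ)`. -/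
def IsTrigPolyDegLE (d : ℕ) (F : ℝ → ℝ) : Prop :=
  ∃ q : ℂ[X], q.natDegree ≤ 2 * d ∧
    ∀ θ : ℝ, q.eval (cexp (θ * I)) = cexp (d * θ * I) * F θ

namespace IsTrigPolyDegLE

theorem sub {d : ℕ} {F G : ℝ → ℝ} (hF : IsTrigPolyDegLE d F) (hG : IsTrigPolyDegLE d G) :
    IsTrigPolyDegLE d (F - G) := by
  obtain ⟨q, hq, hqF⟩ := hF
  obtain ⟨r, hr, hrG⟩ := hG
  refine ⟨q - r, (natDegree_sub_le _ _).trans (max_le hq hr), fun θ => ?_⟩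
  simp [hqF, hrG, mul_sub]

theorem eq_zero_of_two_mul_lt_card {d : ℕ} {F : ℝ → ℝ} (hF : IsTrigPolyDegLE d F) {a : ℝ}
    {s : Finset ℝ} (hs : ↑s ⊆ Ico a (a + 2 * π)) (hcard : 2 * d < #s)
    (hzero : ∀ θ ∈ s, F θ = 0) (θ : ℝ) : F θ = 0 := by
  obtain ⟨q, hq, hqF⟩ := hF
  have hinj : InjOn (fun θ : ℝ => cexp (θ * I)) s := by
    intro x hx y hy hxy
    refine Circle.exp_injOn_Ico (by linarith) (hs hx) (hs hy) (Circle.ext ?_)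
    simpa [Circle.coe_exp] using hxy
  have hq0 : q = 0 := by
    refine eq_zero_of_degree_lt_of_eval_index_eq_zero _ hinj ?_ fun θ hθ => ?_
    · exact (degree_le_of_natDegree_le hq).trans_lt (by exact_mod_cast hcard)
    · simp [hqF, hzero θ hθ]
  simpa [hq0, Complex.exp_ne_zero] using (hqF θ).symm

theorem false_of_neg_one_pow_mul_pos_of_hasDerivAt_pos {d : ℕ} {F : ℝ → ℝ}
    (hF : IsTrigPolyDegLE d F) (hd : 0 < d) (hFc : Continuous F) {τ : ℕ → ℝ} (hτ : StrictMono τ)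
    (hperiod : τ (2 * d) = τ 0 + 2 * π) (halt : ∀ m, 0 < (-1) ^ m * F (τ m)) {θ₀ F' : ℝ}
    (hθ₀ : θ₀ ∈ Ioo (τ 0) (τ 1)) (hF₀ : F θ₀ = 0) (hder : HasDerivAt F F' θ₀) (hF' : 0 < F') :
    False := by
  obtain ⟨s, hs, hcard, hzero⟩ :=
    exists_finset_zeros_of_neg_one_pow_mul_pos hFc hτ halt hθ₀ hF₀ hder hF' (2 * d - 1)
  rw [Nat.sub_add_cancel (by omega), hperiod] at hs
  have := hF.eq_zero_of_two_mul_lt_card (hs.trans Ioo_subset_Ico_self) (by omega) hzero (τ 0)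
  simpa [this] using halt 0

end IsTrigPolyDegLE

theorem isTrigPolyDegLE_eval_cos {p : ℝ[X]} {d : ℕ} (hp : p.natDegree ≤ d) :
    IsTrigPolyDegLE d (fun θ => p.eval (cos θ)) := by
  refine ⟨∑ j ∈ Finset.range (d + 1),
    C ((p.coeff j : ℂ) / 2 ^ j) * ((X ^ 2 + 1) ^ j * X ^ (d - j)), ?_, fun θ => ?_⟩
  · refine natDegree_sum_le_of_forall_le _ _ fun j hj => ?_
    have hj : j ≤ d := Nat.lt_succ_iff.mp (Finset.mem_range.mp hj)
    have h2 : (X ^ 2 + 1 : ℂ[X]).natDegree ≤ 2 := by compute_degree!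
    grw [natDegree_C_mul_le, natDegree_mul_le, natDegree_pow_le, natDegree_X_pow_le, h2]
    omega
  · have hz : ∀ j ≤ d, (cexp (θ * I) ^ 2 + 1) ^ j * cexp (θ * I) ^ (d - j)
        = 2 ^ j * cos θ ^ j * cexp (d * θ * I) := by
      intro j hj
      rw [Complex.exp_ofReal_mul_I_sq_add_one, mul_pow, mul_pow, mul_assoc, ← pow_add,
        Nat.add_sub_cancel' hj, ← Complex.exp_nat_mul]
      ring_nf
    simp only [eval_finsetSum, eval_mul, eval_C, eval_pow, eval_add, eval_X, eval_one]
    rw [eval_eq_sum_range' (Nat.lt_succ_of_le hp), Complex.ofReal_sum, Finset.mul_sum]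
    refine Finset.sum_congr rfl fun j hj => ?_
    rw [hz j (Nat.lt_succ_iff.mp (Finset.mem_range.mp hj))]
    push_cast
    field_simp

theorem isTrigPolyDegLE_sin_nat_mul_add (d : ℕ) (c : ℝ) :
    IsTrigPolyDegLE d (fun θ => sin (d * θ + c)) := by
  refine ⟨C (I / 2 * cexp (-c * I)) - C (I / 2 * cexp (c * I)) * X ^ (2 * d), ?_, fun θ => ?_⟩
  · have : (C (I / 2 * cexp (c * I)) * X ^ (2 * d)).natDegree ≤ 2 * d := by
      compute_degree
    grw [natDegree_sub_le, natDegree_C, this]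
    simp
  · have h1 : cexp (d * θ * I) * cexp (-(d * θ + c) * I) = cexp (-c * I) := by
      rw [← Complex.exp_add]
      ring_nf
    have h2 : cexp (d * θ * I) * cexp ((d * θ + c) * I)
        = cexp (c * I) * cexp (θ * I) ^ (2 * d) := by
      rw [← Complex.exp_nat_mul, ← Complex.exp_add, ← Complex.exp_add]
      push_cast
      ring_nf
    simp only [eval_sub, eval_C, eval_mul, eval_pow, eval_X]
    push_cast
    rw [Complex.sin]
    linear_combination (I / 2) * (h2 - h1)

theorem neg_sin_mul_derivative_eval_cos_le {p : ℝ[X]} {d : ℕ} (hd : 0 < d)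
    (hp : p.natDegree ≤ d) (hp1 : ∀ θ, |p.eval (cos θ)| < 1) (θ₀ : ℝ) :
    -sin θ₀ * p.derivative.eval (cos θ₀) ≤ d := by
  by_contra! hD
  have hd' : (0 : ℝ) < d := by exact_mod_cast hd
  obtain ⟨hp₀, hp₀'⟩ := abs_lt.mp (hp1 θ₀)
  set β := arcsin (p.eval (cos θ₀))
  have hβ : -(π / 2) < β ∧ β < π / 2 :=
    ⟨neg_pi_div_two_lt_arcsin.mpr hp₀, arcsin_lt_pi_div_two.mpr hp₀'⟩
  have hsinβ : sin β = p.eval (cos θ₀) := sin_arcsin hp₀.le hp₀'.le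
  set h : ℝ → ℝ := fun θ => p.eval (cos θ) - sin (d * θ + (β - d * θ₀))
  -- `h` vanishes at `θ₀`; at the points `τ m` the sinusoid equals `-(-1) ^ m`.
  set τ : ℕ → ℝ := fun m => θ₀ + (m * π - π / 2 - β) / d
  have hτ : StrictMono τ := fun m n hmn => by
    have : (m : ℝ) < n := by exact_mod_cast hmn
    simp only [τ]
    gcongr
  have halt : ∀ m, 0 < (-1) ^ m * h (τ m) := by
    intro m
    have harg : d * τ m + (β - d * θ₀) = m * π - π / 2 := by
      simp only [τ]
      field_simp
      ring
    have h1 := abs_lt.mp (hp1 (τ m))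
    simp only [h, harg, sin_sub_pi_div_two, cos_nat_mul_pi]
    rcases neg_one_pow_eq_or ℝ m with hm | hm <;> rw [hm] <;> linarith
  have hlin : d * θ₀ + (β - d * θ₀) = β := by ring
  have hder : HasDerivAt h (-sin θ₀ * p.derivative.eval (cos θ₀) - d * cos β) θ₀ := by
    have := ((p.hasDerivAt (cos θ₀)).comp θ₀ (hasDerivAt_cos θ₀)).sub
      (((hasDerivAt_id θ₀).const_mul (d : ℝ)).add_const (β - d * θ₀)).sin
    simp only [id, hlin] at this
    exact this.congr_deriv (by ring)
  refine ((isTrigPolyDegLE_eval_cos hp).sub (isTrigPolyDegLE_sin_nat_mul_add d (β - d * θ₀))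
    ).false_of_neg_one_pow_mul_pos_of_hasDerivAt_pos hd (by fun_prop) hτ ?_ halt ?_
    (by simp [hlin, hsinβ]) hder (by nlinarith [cos_le_one β])
  · simp only [τ]
    push_cast
    field_simp
    ring
  · simp only [τ, Nat.cast_zero, Nat.cast_one, mem_Ioo]
    constructor
    · linarith [div_neg_of_neg_of_pos (by linarith : 0 * π - π / 2 - β < 0) hd']
    · linarith [div_pos (by linarith : 0 < 1 * π - π / 2 - β) hd']

theorem abs_sin_mul_derivative_eval_cos_le {p : ℝ[X]}
    (hp : ∀ x ∈ Icc (-1 : ℝ) 1, |p.eval x| ≤ 1) (θ : ℝ) :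
    |sin θ * p.derivative.eval (cos θ)| ≤ p.natDegree := by
  rcases Nat.eq_zero_or_pos p.natDegree with hd | hd
  · simp [derivative_of_natDegree_zero hd]
  have hscaled : ∀ c ∈ Ioo (0 : ℝ) 1, ∀ φ,
      -sin φ * (c * p.derivative.eval (cos φ)) ≤ p.natDegree := by
    intro c hc φ
    have hcos : ∀ ψ, |(C c * p).eval (cos ψ)| < 1 := fun ψ => by
      rw [eval_mul, eval_C, abs_mul, abs_of_pos hc.1]
      calc c * |p.eval (cos ψ)| ≤ c * 1 :=
            mul_le_mul_of_nonneg_left (hp _ ⟨neg_one_le_cos ψ, cos_le_one ψ⟩) hc.1.le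
        _ < 1 := by linarith [hc.2]
    simpa [derivative_C_mul] using
      neg_sin_mul_derivative_eval_cos_le hd (natDegree_C_mul_le c p) hcos φ
  refine le_of_tendsto (((continuous_id.mul continuous_const).tendsto' (1 : ℝ) _ (one_mul _)
    ).mono_left (nhdsWithin_le_nhds (s := Iio 1))) ?_
  filter_upwards [Ioo_mem_nhdsLT zero_lt_one] with c hc
  have h₁ := hscaled c hc θ
  have h₂ := hscaled c hc (-θ)
  rw [sin_neg, cos_neg] at h₂
  show c * _ ≤ _
  rw [← abs_of_pos hc.1, ← abs_mul]
  exact abs_le.mpr ⟨by linarith, by linarith⟩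

theorem inv_le_sin_of_abs_cos_le {d : ℕ} (hd : 0 < d) {θ : ℝ} (hθ : θ ∈ Icc 0 π)
    (hcos : |cos θ| ≤ cos (π / (2 * d))) : (d : ℝ)⁻¹ ≤ sin θ := by
  have hd' : (1 : ℝ) ≤ d := by exact_mod_cast hd
  have hα : 0 ≤ π / (2 * d) := by positivity
  have hα' : π / (2 * d) ≤ π / 2 := by gcongr; linarith
  have hjordan : (d : ℝ)⁻¹ ≤ sin (π / (2 * d)) := by
    have := mul_le_sin hα hα'
    rwa [show 2 / π * (π / (2 * d)) = (d : ℝ)⁻¹ by field_simp] at this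
  refine hjordan.trans ((sq_le_sq₀ (sin_nonneg_of_nonneg_of_le_pi hα (by linarith))
    (sin_nonneg_of_nonneg_of_le_pi hθ.1 hθ.2)).mp ?_)
  have : cos θ ^ 2 ≤ cos (π / (2 * d)) ^ 2 := by
    rw [← sq_abs]; gcongr
  nlinarith [sin_sq_add_cos_sq θ, sin_sq_add_cos_sq (π / (2 * d))]

theorem abs_derivative_eval_le_of_abs_le_cos {p : ℝ[X]}
    (hp : ∀ x ∈ Icc (-1 : ℝ) 1, |p.eval x| ≤ 1) (hd : 0 < p.natDegree) {x : ℝ}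
    (hx : x ∈ Icc (-1 : ℝ) 1) (hxd : |x| ≤ cos (π / (2 * p.natDegree))) :
    |p.derivative.eval x| ≤ (p.natDegree : ℝ) ^ 2 := by
  have hθ : arccos x ∈ Icc 0 π := ⟨arccos_nonneg x, arccos_le_pi x⟩
  have hcos := cos_arccos hx.1 hx.2
  have hsin := inv_le_sin_of_abs_cos_le hd hθ (by rwa [hcos])
  have hb := abs_sin_mul_derivative_eval_cos_le hp (arccos x)
  rw [abs_mul, abs_of_nonneg (sin_nonneg_of_nonneg_of_le_pi hθ.1 hθ.2), hcos] at hb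
  calc |p.derivative.eval x| = p.natDegree * ((p.natDegree : ℝ)⁻¹ * |p.derivative.eval x|) := by
        field_simp
    _ ≤ p.natDegree * (sin (arccos x) * |p.derivative.eval x|) := by gcongr
    _ ≤ p.natDegree * p.natDegree := by gcongr
    _ = (p.natDegree : ℝ) ^ 2 := by ring

theorem Polynomial.Chebyshev.T_real_eq_C_leadingCoeff_mul_nodal (n : ℕ) :
    T ℝ n = Polynomial.C (T ℝ n).leadingCoeff *
      Lagrange.nodal (Finset.range n) (fun k : ℕ => cos ((2 * k + 1) * π / (2 * n))) := by
  have hinj := (Finset.range n).nodup_map_iff_injOn.mp (roots_T_real_nodup n)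
  have hcard : Multiset.card (T ℝ n).roots = (T ℝ n).natDegree := by
    rw [roots_T_real, natDegree_T, Finset.card_val, Finset.card_image_of_injOn hinj,
      Finset.card_range, Int.natAbs_natCast]
  conv_lhs => rw [← C_leadingCoeff_mul_prod_multiset_X_sub_C hcard, roots_T_real]
  rw [Lagrange.nodal, ← Finset.prod_image (f := fun x => X - Polynomial.C x) hinj]
  rfl

theorem Polynomial.Chebyshev.sin_mul_derivative_T_real_eval_cos (n : ℕ) (θ : ℝ) :
    sin θ * (derivative (T ℝ n)).eval (cos θ) = n * sin (n * θ) := by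
  have := U_real_cos θ (n - 1)
  push_cast at this
  rw [sub_add_cancel] at this
  rw [T_derivative_eq_U, eval_mul, eval_intCast, ← this]
  push_cast
  ring

/-- To the right of all nodes, the Lagrange basis polynomial of node `v i` has the sign of
`1 / W'(v i)` for `W = nodal s v`, so the interpolation formula can be bounded termwise. -/
theorem Lagrange.abs_eval_le_mul_eval_derivative_nodal {ι : Type*} [DecidableEq ι]
    {s : Finset ι} {v : ι → ℝ} (hvs : InjOn v s) {q : ℝ[X]} (hq : q.degree < #s) {M x : ℝ}
    (hx : ∀ i ∈ s, v i < x)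
    (hnode : ∀ i ∈ s, |q.eval (v i)| ≤ M * |(derivative (nodal s v)).eval (v i)|) :
    |q.eval x| ≤ M * (derivative (nodal s v)).eval x := by
  have hxv : ∀ i ∈ s, x ≠ v i := fun i hi => (hx i hi).ne'
  have hW : 0 < (nodal s v).eval x := by
    rw [eval_nodal]
    exact Finset.prod_pos fun i hi => sub_pos.2 (hx i hi)
  have hW' : (derivative (nodal s v)).eval x = (nodal s v).eval x * ∑ i ∈ s, (x - v i)⁻¹ := by
    rw [derivative_nodal, eval_finsetSum, Finset.mul_sum]
    refine Finset.sum_congr rfl fun i hi => ?_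
    rw [nodal_eq_mul_nodal_erase hi, eval_mul, eval_sub, eval_X, eval_C,
      mul_comm (x - v i), mul_assoc, mul_inv_cancel₀ (sub_ne_zero.2 (hxv i hi)), mul_one]
  have hterm : ∀ i ∈ s, |nodalWeight s v i * (x - v i)⁻¹ * q.eval (v i)| ≤ M * (x - v i)⁻¹ := by
    intro i hi
    have hne : (derivative (nodal s v)).eval (v i) ≠ 0 := by
      simpa [nodalWeight_eq_eval_derivative_nodal hi] using nodalWeight_ne_zero hvs hi
    rw [nodalWeight_eq_eval_derivative_nodal hi, abs_mul, abs_mul, abs_inv, abs_inv,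
      abs_of_pos (sub_pos.2 (hx i hi))]
    calc |(derivative (nodal s v)).eval (v i)|⁻¹ * (x - v i)⁻¹ * |q.eval (v i)|
        = |q.eval (v i)| / |(derivative (nodal s v)).eval (v i)| * (x - v i)⁻¹ := by ring
      _ ≤ M * (x - v i)⁻¹ := by
        gcongr
        · exact inv_nonneg.2 (sub_pos.2 (hx i hi)).le
        · rw [div_le_iff₀ (abs_pos.2 hne)]
          exact hnode i hi
  calc |q.eval x|
      = |(nodal s v).eval x * ∑ i ∈ s, nodalWeight s v i * (x - v i)⁻¹ * q.eval (v i)| := by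
        rw [← eval_interpolate_not_at_node _ hxv, ← eq_interpolate hvs hq]
    _ ≤ (nodal s v).eval x * ∑ i ∈ s, M * (x - v i)⁻¹ := by
        rw [abs_mul, abs_of_pos hW]
        gcongr
        exact (Finset.abs_sum_le_sum_abs _ _).trans (Finset.sum_le_sum hterm)
    _ = M * (derivative (nodal s v)).eval x := by
        rw [hW', ← Finset.mul_sum]
        ring

theorem abs_derivative_eval_le_abs_derivative_T_real_eval_root {p : ℝ[X]}
    (hp : ∀ x ∈ Icc (-1 : ℝ) 1, |p.eval x| ≤ 1) {k : ℕ} (hk : k < p.natDegree) :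
    |p.derivative.eval (cos ((2 * k + 1) * π / (2 * p.natDegree)))| ≤
      |(derivative (Chebyshev.T ℝ p.natDegree)).eval
        (cos ((2 * k + 1) * π / (2 * p.natDegree)))| := by
  set d := p.natDegree
  set θ := (2 * k + 1) * π / (2 * d)
  have hk' : (k : ℝ) + 1 ≤ d := by exact_mod_cast hk
  have hd : (0 : ℝ) < d := by linarith [(k.cast_nonneg : (0 : ℝ) ≤ k)]
  have hsin : 0 < sin θ := sin_pos_of_pos_of_lt_pi (by positivity) (by
    rw [div_lt_iff₀ (by positivity)]
    nlinarith [pi_pos])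
  have hT : sin θ * |(derivative (Chebyshev.T ℝ d)).eval (cos θ)| = d := by
    have harg : d * θ = k * π + π / 2 := by
      simp only [θ]
      field_simp
    rw [← abs_of_pos hsin, ← abs_mul, Chebyshev.sin_mul_derivative_T_real_eval_cos, harg,
      sin_add_pi_div_two, cos_nat_mul_pi, abs_mul, abs_pow, abs_neg, abs_one, one_pow, mul_one,
      Nat.abs_cast]
  have hp' := abs_sin_mul_derivative_eval_cos_le hp θ
  rw [abs_mul, abs_of_pos hsin] at hp'
  exact le_of_mul_le_mul_left (hp'.trans hT.ge) hsin

theorem abs_derivative_eval_le_of_cos_lt {p : ℝ[X]}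
    (hp : ∀ x ∈ Icc (-1 : ℝ) 1, |p.eval x| ≤ 1) (hd : 0 < p.natDegree) {x : ℝ}
    (hx : cos (π / (2 * p.natDegree)) < x) (hx1 : x ≤ 1) :
    |p.derivative.eval x| ≤ (p.natDegree : ℝ) ^ 2 := by
  set d := p.natDegree
  set t : ℕ → ℝ := fun k => cos ((2 * k + 1) * π / (2 * d))
  set W := Lagrange.nodal (Finset.range d) t
  set c := (Chebyshev.T ℝ d).leadingCoeff
  have hT : ∀ y, (derivative (Chebyshev.T ℝ d)).eval y = c * (derivative W).eval y := by
    intro y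
    rw [Chebyshev.T_real_eq_C_leadingCoeff_mul_nodal, derivative_C_mul, eval_mul, eval_C]
  have hinj : InjOn t (Finset.range d) :=
    (Finset.range d).nodup_map_iff_injOn.mp (Chebyshev.roots_T_real_nodup d)
  have hdeg : p.derivative.degree < #(Finset.range d) := by
    rw [Finset.card_range]
    exact (degree_derivative_lt (ne_zero_of_natDegree_gt hd)).trans_le degree_le_natDegree
  have ht : ∀ k ∈ Finset.range d, t k < x := by
    intro k hk
    have hk' : (k : ℝ) + 1 ≤ d := by exact_mod_cast Finset.mem_range.mp hk
    refine lt_of_le_of_lt (cos_le_cos_of_nonneg_of_le_pi (by positivity) ?_ ?_) hx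
    · rw [div_le_iff₀ (by positivity)]
      nlinarith [pi_pos]
    · gcongr
      nlinarith [pi_pos, (k.cast_nonneg : (0 : ℝ) ≤ k)]
  have hnode : ∀ k ∈ Finset.range d,
      |p.derivative.eval (t k)| ≤ |c| * |(derivative W).eval (t k)| := by
    intro k hk
    rw [← abs_mul, ← hT]
    exact abs_derivative_eval_le_abs_derivative_T_real_eval_root hp (Finset.mem_range.mp hk)
  have hx' : |x| ≤ 1 := abs_le.mpr ⟨(neg_one_le_cos _).trans hx.le, hx1⟩
  calc |p.derivative.eval x| ≤ |c| * (derivative W).eval x :=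
        Lagrange.abs_eval_le_mul_eval_derivative_nodal hinj hdeg ht hnode
    _ ≤ |c| * |(derivative W).eval x| := by gcongr; exact le_abs_self _
    _ = |(derivative (Chebyshev.T ℝ d)).eval x| := by rw [hT, abs_mul]
    _ ≤ (derivative (Chebyshev.T ℝ d)).eval 1 :=
        Chebyshev.abs_iterate_derivative_T_real_le d 1 hx'
    _ = (d : ℝ) ^ 2 := by simpa using Chebyshev.derivative_T_eval_one (R := ℝ) d

theorem abs_derivative_eval_le_of_cos_lt_abs {p : ℝ[X]}
    (hp : ∀ x ∈ Icc (-1 : ℝ) 1, |p.eval x| ≤ 1) (hd : 0 < p.natDegree) {x : ℝ}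
    (hx : cos (π / (2 * p.natDegree)) < |x|) (hx1 : |x| ≤ 1) :
    |p.derivative.eval x| ≤ (p.natDegree : ℝ) ^ 2 := by
  rcases le_or_gt 0 x with h0 | h0
  · rw [abs_of_nonneg h0] at hx hx1
    exact abs_derivative_eval_le_of_cos_lt hp hd hx hx1
  · rw [abs_of_neg h0] at hx hx1
    have hq : (p.comp (-X)).natDegree = p.natDegree := by simp [natDegree_comp]
    have hqp : ∀ y ∈ Icc (-1 : ℝ) 1, |(p.comp (-X)).eval y| ≤ 1 := fun y hy => by
      simpa using hp (-y) ⟨by linarith [hy.2], by linarith [hy.1]⟩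
    have := abs_derivative_eval_le_of_cos_lt hqp (hq ▸ hd) (hq ▸ hx) hx1
    simpa [hq, derivative_comp] using this

theorem markov_brothers (p : Polynomial ℝ)
    (hbd : ∀ x ∈ Set.Icc (-1 : ℝ) 1, |p.eval x| ≤ 1) :
    ∀ x ∈ Set.Icc (-1 : ℝ) 1, |p.derivative.eval x| ≤ (p.natDegree : ℝ) ^ 2 := by
  intro x hx
  rcases Nat.eq_zero_or_pos p.natDegree with hd | hd
  · simp [derivative_of_natDegree_zero hd]
  rcases le_or_gt |x| (cos (π / (2 * p.natDegree))) with hint | hext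
  · exact abs_derivative_eval_le_of_abs_le_cos hbd hd hx hint
  · exact abs_derivative_eval_le_of_cos_lt_abs hbd hd hext (abs_le.mpr hx)
end

section
/- Assuming Markov brothers' inequality (|p'(x)| ≤ deg(p)² on [-1,1] whenever |p| ≤ 1 on [-1,1]): for every constant ε with 0 < ε < (e-1)/(2e) and every integer q ≥ 2, any polynomial p with |p(x)| ≤ 1 on [-1,1] and sup_{x∈[-1,1]}|p(x) - x^q| ≤ ε has degree at least √(q(1 - 1/e - 2ε)). -/
theorem approx_degree_lower_bound
    (markov : ∀ r : Polynomial ℝ, (∀ x ∈ Set.Icc (-1 : ℝ) 1, |r.eval x| ≤ 1) →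
      ∀ x ∈ Set.Icc (-1 : ℝ) 1, |r.derivative.eval x| ≤ (r.natDegree : ℝ) ^ 2)
    (ε : ℝ) (hε : 0 < ε) (hε' : ε < (Real.exp 1 - 1) / (2 * Real.exp 1))
    (q : ℕ) (hq : 2 ≤ q) (p : Polynomial ℝ)
    (hbd : ∀ x ∈ Set.Icc (-1 : ℝ) 1, |p.eval x| ≤ 1)
    (happrox : ∀ x ∈ Set.Icc (-1 : ℝ) 1, |p.eval x - x ^ q| ≤ ε) :
    (p.natDegree : ℝ) ≥ Real.sqrt ((q : ℝ) * (1 - (Real.exp 1)⁻¹ - 2 * ε)) := by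
  have hq2 : (2:ℝ) ≤ (q:ℝ) := by exact_mod_cast hq
  have hqpos : (0:ℝ) < q := by linarith
  have hqne : (q:ℝ) ≠ 0 := ne_of_gt hqpos
  set a : ℝ := 1 - 1/(q:ℝ) with ha
  have hinvpos : (0:ℝ) < 1/(q:ℝ) := by positivity
  have hinvhalf : 1/(q:ℝ) ≤ 1/2 := by
    apply one_div_le_one_div_of_le <;> linarith
  have ha0 : 0 ≤ a := by rw [ha]; linarith
  have hab : a < 1 := by rw [ha]; linarith
  have haIcc : a ∈ Set.Icc (-1:ℝ) 1 := ⟨by linarith, le_of_lt hab⟩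
  have key : a ^ q ≤ Real.exp (-1) := by
    have h1 : a ≤ Real.exp (-(1/(q:ℝ))) := by
      have h := Real.add_one_le_exp (-(1/(q:ℝ)))
      rw [ha]; linarith
    calc a ^ q ≤ Real.exp (-(1/(q:ℝ))) ^ q := pow_le_pow_left₀ ha0 h1 q
      _ = Real.exp ((q:ℝ) * (-(1/(q:ℝ)))) := (Real.exp_nat_mul _ q).symm
      _ = Real.exp (-1) := by rw [show (q:ℝ) * (-(1/(q:ℝ))) = -1 by field_simp]
  obtain ⟨c, hc, hceq⟩ := exists_hasDerivAt_eq_slope (fun x => p.eval x)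
    (fun x => p.derivative.eval x) hab
    (p.continuous_aeval.continuousOn) (fun x _ => p.hasDerivAt x)
  have hcIcc : c ∈ Set.Icc (-1:ℝ) 1 := ⟨by linarith [hc.1], le_of_lt hc.2⟩
  have hderiv_eq : p.derivative.eval c = (p.eval 1 - p.eval a) * q := by
    rw [hceq, show (1:ℝ) - a = 1/(q:ℝ) by rw [ha]; ring]
    field_simp
  have h1 := abs_le.mp (by simpa using happrox 1 ⟨by norm_num, le_refl 1⟩)
  have h2 := abs_le.mp (happrox a haIcc)
  have hmar := markov p hbd c hcIcc
  have hexp : Real.exp (-1) = (Real.exp 1)⁻¹ := Real.exp_neg 1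
  have hM : (q:ℝ) * (1 - (Real.exp 1)⁻¹ - 2*ε) ≤ ((p.natDegree : ℝ))^2 := by
    have habs := le_abs_self (p.derivative.eval c)
    nlinarith [h1.1, h1.2, h2.1, h2.2, key, hqpos]
  rw [ge_iff_le]
  calc Real.sqrt ((q:ℝ) * (1 - (Real.exp 1)⁻¹ - 2*ε))
      ≤ Real.sqrt (((p.natDegree:ℝ))^2) := Real.sqrt_le_sqrt hM
    _ = (p.natDegree : ℝ) := Real.sqrt_sq (Nat.cast_nonneg _)
end

section
/- For the two-point distributions p⁺ = (2/3 + ε, 1/3 - ε) and p⁻ = (2/3 - ε, 1/3 + ε) with 0 < ε ≤ 1/12, the squared Hellinger distance satisfies d_H²(p⁺, p⁻) = 1 - √(4/9 - ε²) - √(1/9 - ε²) ≤ 9ε²/2. -/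
theorem hellinger_sq_le_const (ε : ℝ) (hε : 0 < ε) (hε' : ε ≤ 1 / 12) :
    1 - Real.sqrt (4 / 9 - ε ^ 2) - Real.sqrt (1 / 9 - ε ^ 2) ≤ 9 * ε ^ 2 / 2 := by
  have he2 : ε ^ 2 ≤ 1 / 144 := by nlinarith
  have h1 : (2 / 3 - 3 / 2 * ε ^ 2 : ℝ) ≤ Real.sqrt (4 / 9 - ε ^ 2) := by
    apply Real.le_sqrt' (by nlinarith) |>.mpr
    nlinarith [sq_nonneg ε, mul_le_mul he2 he2 (sq_nonneg ε) (by norm_num)]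
  have h2 : (1 / 3 - 3 * ε ^ 2 : ℝ) ≤ Real.sqrt (1 / 9 - ε ^ 2) := by
    apply Real.le_sqrt' (by nlinarith) |>.mpr
    nlinarith [sq_nonneg ε, mul_le_mul he2 he2 (sq_nonneg ε) (by norm_num)]
  linarith
end
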